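/- Let $\mu$ and $\mu'$ be independent critical offspring distributions with finite variance, let $\tau,\tau'$ be independent Bienaymé trees with offspring distributions $\mu,\mu'$, and for $\varepsilon>0, h>0$ define $p_\varepsilon(h)=\mathbb{P}\big(\mathrm{Ht}(\tau)\wedge\mathrm{Ht}(\tau')\le h\,;\, h^{-\varepsilon}\operatorname{LCS}^\bullet(\tau,\tau')>\mathrm{Ht}(\tau)\wedge\mathrm{Ht}(\tau')+1\big)$. Assume that for every $\gamma>0$ and $\varepsilon>0$ there is $C>0$ with $p_\varepsilon(h)\le C h^{-\gamma}$ for all $h>0$, and that there is $C_0$ with $\mathbb{P}(\mathrm{Ht}(\tau)\ge \ell)\,\mathbb{P}(\mathrm{Ht}(\tau')\ge \ell)\le C_0\ell^{-2}$ for all $\ell\ge 1$. Then for every $\varepsilon>0$ there exists $C>0$ such that $\mathbb{P}(\operatorname{LCS}^\bullet(\tau,\tau')>h)\le C h^{-2/(1+\varepsilon)}$ for all $h>0$. -/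

import Mathlib

inductive PlaneTree : Type where
  | node : List PlaneTree → PlaneTree

instance : MeasurableSpace PlaneTree := ⊤

namespace PlaneTree

mutual
def size : PlaneTree → ℕ
  | .node ts => 1 + sizeF ts
def sizeF : List PlaneTree → ℕ
  | [] => 0
  | t :: ts => size t + sizeF ts
end

mutual
def height : PlaneTree → ℕ
  | .node ts => heightF ts
def heightF : List PlaneTree → ℕ
  | [] => 0
  | t :: ts => max (height t + 1) (heightF ts)
end

mutual
def maxDeg : PlaneTree → ℕ
  | .node ts => max ts.length (maxDegF ts)
def maxDegF : List PlaneTree → ℕ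
  | [] => 0
  | t :: ts => max (maxDeg t) (maxDegF ts)
end

mutual
def treeProb (μ : ℕ → ℝ) : PlaneTree → ℝ
  | .node ts => μ ts.length * forestProb μ ts
def forestProb (μ : ℕ → ℝ) : List PlaneTree → ℝ
  | [] => 1
  | t :: ts => treeProb μ t * forestProb μ ts
end

/-- Law of a root-biased Bienaymé tree. -/
def rootBiasedProb (μ : ℕ → ℝ) : PlaneTree → ℝ
  | .node ts => (ts.length + 1 : ℝ) * μ (ts.length + 1) * forestProb μ ts

/-- Root-preserving embedding of plane trees (ignoring the plane order). -/
inductive Embeds : PlaneTree → PlaneTree → Prop where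
  | intro (ss ts : List PlaneTree) (f : Fin ss.length → Fin ts.length)
      (hinj : Function.Injective f)
      (h : ∀ i, Embeds (ss.get i) (ts.get (f i))) :
      Embeds (.node ss) (.node ts)

/-- Maximum size of a common rooted subtree. -/
noncomputable def LCSr (t t' : PlaneTree) : ℕ :=
  sSup {n | ∃ s : PlaneTree, s.size = n ∧ s.Embeds t ∧ s.Embeds t'}

end PlaneTree

open MeasureTheory ProbabilityTheory Filter PlaneTree

/-- Tail bound for the largest common rooted subtree of two independent critical
finite-variance Bienaymé trees, deduced from a super-polynomial bound on
`p_ε(h)` and the product bound on the height tails. -/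
theorem lcs_rooted_tail {Ω : Type*} [MeasureSpace Ω]
    [IsProbabilityMeasure (ℙ : Measure Ω)]
    (μ μ' : ℕ → ℝ)
    (hnn : ∀ k, 0 ≤ μ k) (hnn' : ∀ k, 0 ≤ μ' k)
    (hsum : ∑' k : ℕ, μ k = 1) (hsum' : ∑' k : ℕ, μ' k = 1)
    (hcrit : ∑' k : ℕ, (k : ℝ) * μ k = 1) (hcrit' : ∑' k : ℕ, (k : ℝ) * μ' k = 1)
    (hvar : Summable (fun k : ℕ => (k : ℝ) ^ 2 * μ k))
    (hvar' : Summable (fun k : ℕ => (k : ℝ) ^ 2 * μ' k))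
    (h0 : 0 < μ 0) (h0' : 0 < μ' 0)
    (τ τ' : Ω → PlaneTree) (hτmeas : Measurable τ) (hτ'meas : Measurable τ')
    (hlaw : ∀ t : PlaneTree, ℙ {ω | τ ω = t} = ENNReal.ofReal (treeProb μ t))
    (hlaw' : ∀ t : PlaneTree, ℙ {ω | τ' ω = t} = ENNReal.ofReal (treeProb μ' t))
    (hindep : IndepFun τ τ' ℙ)
    (hp : ∀ γ : ℝ, 0 < γ → ∀ ε : ℝ, 0 < ε → ∃ C : ℝ, 0 < C ∧ ∀ h : ℝ, 0 < h →
      ℙ {ω | ((min (τ ω).height (τ' ω).height : ℕ) : ℝ) ≤ h ∧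
            ((min (τ ω).height (τ' ω).height : ℕ) : ℝ) + 1 <
              h ^ (-ε) * (LCSr (τ ω) (τ' ω) : ℝ)}
        ≤ ENNReal.ofReal (C * h ^ (-γ)))
    (C₀ : ℝ)
    (hht : ∀ ℓ : ℕ, 1 ≤ ℓ →
      ℙ {ω | ℓ ≤ (τ ω).height} * ℙ {ω | ℓ ≤ (τ' ω).height}
        ≤ ENNReal.ofReal (C₀ * (ℓ : ℝ) ^ (-2 : ℝ))) :
    ∀ ε : ℝ, 0 < ε → ∃ C : ℝ, 0 < C ∧ ∀ h : ℝ, 0 < h →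
      ℙ {ω | h < (LCSr (τ ω) (τ' ω) : ℝ)}
        ≤ ENNReal.ofReal (C * h ^ (-(2 / (1 + ε)))) := by
  intro ε hε
  obtain ⟨C₁, hC₁pos, hC₁⟩ := hp 2 (by norm_num) ε hε
  set M : ℝ := max C₀ 1 with hMdef
  have hM1 : (1 : ℝ) ≤ M := le_max_right _ _
  have hM0 : (0 : ℝ) ≤ M := by linarith
  have hC₀M : C₀ ≤ M := le_max_left _ _
  refine ⟨max 1 (4 * M + C₁), lt_of_lt_of_le one_pos (le_max_left _ _), ?_⟩
  have hCbig : 4 * M + C₁ ≤ max 1 (4 * M + C₁) := le_max_right _ _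
  have hC1' : (1 : ℝ) ≤ max 1 (4 * M + C₁) := le_max_left _ _
  intro h hh
  have h1ε : (0 : ℝ) < 1 + ε := by linarith
  rcases lt_or_ge h 1 with hsmall | hbig
  · -- small h : probability ≤ 1 ≤ C * h ^ (-(2/(1+ε)))
    have hz : (1 : ℝ) ≤ h ^ (-(2 / (1 + ε))) :=
      Real.one_le_rpow_of_pos_of_le_one_of_nonpos hh hsmall.le
        (neg_nonpos.mpr (by positivity))
    have : (1 : ℝ) ≤ max 1 (4 * M + C₁) * h ^ (-(2 / (1 + ε))) := by nlinarith
    calc ℙ {ω | h < (LCSr (τ ω) (τ' ω) : ℝ)} ≤ 1 := prob_le_one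
      _ ≤ ENNReal.ofReal (max 1 (4 * M + C₁) * h ^ (-(2 / (1 + ε)))) := by
          rw [← ENNReal.ofReal_one]; exact ENNReal.ofReal_le_ofReal this
  · -- main case h ≥ 1
    set k : ℝ := h ^ (1 / (1 + ε)) with hkdef
    have hk1 : (1 : ℝ) ≤ k := by
      rw [hkdef]
      calc (1 : ℝ) = (1 : ℝ) ^ (1 / (1 + ε)) := (Real.one_rpow _).symm
        _ ≤ h ^ (1 / (1 + ε)) :=
            Real.rpow_le_rpow zero_le_one hbig (by positivity)
    have hk0 : (0 : ℝ) < k := lt_of_lt_of_le one_pos hk1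
    set ℓ : ℕ := ⌊k⌋₊ with hℓdef
    have hℓ1 : 1 ≤ ℓ := Nat.le_floor (by exact_mod_cast hk1)
    have hℓk : (ℓ : ℝ) ≤ k := Nat.floor_le hk0.le
    have hkℓ : k ≤ 2 * ℓ := by
      have h1 : k < ℓ + 1 := Nat.lt_floor_add_one k
      have h2 : (1 : ℝ) ≤ ℓ := by exact_mod_cast hℓ1
      linarith
    -- the exponent identity
    have hkε : k ^ (-ε) * h = k := by
      rw [hkdef, ← Real.rpow_mul hh.le]
      rw [show h ^ (1 / (1 + ε) * -ε) * h = h ^ (1 / (1 + ε) * -ε + 1) by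
            rw [Real.rpow_add hh, Real.rpow_one]]
      congr 1
      field_simp
      ring
    have hk2 : k ^ (-2 : ℝ) = h ^ (-(2 / (1 + ε))) := by
      rw [hkdef, ← Real.rpow_mul hh.le]
      congr 1
      field_simp
    -- set inclusion
    have hsub : {ω | h < (LCSr (τ ω) (τ' ω) : ℝ)} ⊆
        (τ ⁻¹' {t | ℓ ≤ t.height} ∩ τ' ⁻¹' {t | ℓ ≤ t.height}) ∪
        {ω | ((min (τ ω).height (τ' ω).height : ℕ) : ℝ) ≤ k ∧
            ((min (τ ω).height (τ' ω).height : ℕ) : ℝ) + 1 <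
              k ^ (-ε) * (LCSr (τ ω) (τ' ω) : ℝ)} := by
      intro ω hω
      simp only [Set.mem_setOf_eq] at hω
      by_cases hT : ℓ ≤ (τ ω).height ∧ ℓ ≤ (τ' ω).height
      · exact Or.inl ⟨hT.1, hT.2⟩
      · refine Or.inr ?_
        have hm : min (τ ω).height (τ' ω).height < ℓ := by
          rcases not_and_or.mp hT with h1 | h1
          · exact lt_of_le_of_lt (min_le_left _ _) (lt_of_not_ge h1)
          · exact lt_of_le_of_lt (min_le_right _ _) (lt_of_not_ge h1)
        have hm1 : ((min (τ ω).height (τ' ω).height : ℕ) : ℝ) + 1 ≤ k := by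
          have : min (τ ω).height (τ' ω).height + 1 ≤ ℓ := hm
          have : ((min (τ ω).height (τ' ω).height : ℕ) : ℝ) + 1 ≤ (ℓ : ℝ) := by
            exact_mod_cast this
          linarith
        have hlt : k < k ^ (-ε) * (LCSr (τ ω) (τ' ω) : ℝ) := by
          have hkε0 : (0 : ℝ) < k ^ (-ε) := Real.rpow_pos_of_pos hk0 _
          have := mul_lt_mul_of_pos_left hω hkε0
          rwa [hkε] at this
        exact ⟨by linarith, by linarith⟩
    -- probability of the height event via independence
    have hmeasS : MeasurableSet ({t : PlaneTree | ℓ ≤ t.height}) :=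
      MeasurableSpace.measurableSet_top
    have hprod : ℙ (τ ⁻¹' {t | ℓ ≤ t.height} ∩ τ' ⁻¹' {t | ℓ ≤ t.height})
        = ℙ {ω | ℓ ≤ (τ ω).height} * ℙ {ω | ℓ ≤ (τ' ω).height} :=
      hindep.measure_inter_preimage_eq_mul _ _ hmeasS hmeasS
    have hT : ℙ (τ ⁻¹' {t | ℓ ≤ t.height} ∩ τ' ⁻¹' {t | ℓ ≤ t.height})
        ≤ ENNReal.ofReal (C₀ * (ℓ : ℝ) ^ (-2 : ℝ)) := by
      rw [hprod]; exact hht ℓ hℓ1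
    have hS := hC₁ k hk0
    -- real number estimates
    have erpow : ∀ x : ℝ, 0 ≤ x → x ^ (-2 : ℝ) = (x ^ 2)⁻¹ := by
      intro x hx
      rw [Real.rpow_neg hx, show (2 : ℝ) = ((2 : ℕ) : ℝ) by norm_num, Real.rpow_natCast]
    have hℓ2 : (ℓ : ℝ) ^ (-2 : ℝ) ≤ 4 * k ^ (-2 : ℝ) := by
      have hℓ0 : (0 : ℝ) < (ℓ : ℝ) := by exact_mod_cast hℓ1
      rw [erpow _ hℓ0.le, erpow _ hk0.le,
        show (4 : ℝ) * (k ^ 2)⁻¹ = (k ^ 2 / 4)⁻¹ by field_simp]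
      exact inv_anti₀ (by positivity) (by nlinarith)
    have hreal1 : C₀ * (ℓ : ℝ) ^ (-2 : ℝ) ≤ 4 * M * h ^ (-(2 / (1 + ε))) := by
      rw [← hk2]
      have hknn : (0 : ℝ) ≤ k ^ (-2 : ℝ) := Real.rpow_nonneg hk0.le _
      have hℓnn : (0 : ℝ) ≤ (ℓ : ℝ) ^ (-2 : ℝ) := Real.rpow_nonneg (by positivity) _
      nlinarith
    have hreal2 : C₁ * k ^ (-2 : ℝ) = C₁ * h ^ (-(2 / (1 + ε))) := by rw [hk2]
    have hznn : (0 : ℝ) ≤ h ^ (-(2 / (1 + ε))) := Real.rpow_nonneg hh.le _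
    calc ℙ {ω | h < (LCSr (τ ω) (τ' ω) : ℝ)}
        ≤ ℙ ((τ ⁻¹' {t | ℓ ≤ t.height} ∩ τ' ⁻¹' {t | ℓ ≤ t.height}) ∪
            {ω | ((min (τ ω).height (τ' ω).height : ℕ) : ℝ) ≤ k ∧
                ((min (τ ω).height (τ' ω).height : ℕ) : ℝ) + 1 <
                  k ^ (-ε) * (LCSr (τ ω) (τ' ω) : ℝ)}) := measure_mono hsub
      _ ≤ ℙ (τ ⁻¹' {t | ℓ ≤ t.height} ∩ τ' ⁻¹' {t | ℓ ≤ t.height}) +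
          ℙ {ω | ((min (τ ω).height (τ' ω).height : ℕ) : ℝ) ≤ k ∧
              ((min (τ ω).height (τ' ω).height : ℕ) : ℝ) + 1 <
                k ^ (-ε) * (LCSr (τ ω) (τ' ω) : ℝ)} := measure_union_le _ _
      _ ≤ ENNReal.ofReal (C₀ * (ℓ : ℝ) ^ (-2 : ℝ)) + ENNReal.ofReal (C₁ * k ^ (-2 : ℝ)) :=
          add_le_add hT hS
      _ ≤ ENNReal.ofReal (4 * M * h ^ (-(2 / (1 + ε)))) +
          ENNReal.ofReal (C₁ * h ^ (-(2 / (1 + ε)))) := by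
          exact add_le_add (ENNReal.ofReal_le_ofReal hreal1)
            (ENNReal.ofReal_le_ofReal (le_of_eq hreal2))
      _ = ENNReal.ofReal (4 * M * h ^ (-(2 / (1 + ε))) + C₁ * h ^ (-(2 / (1 + ε)))) := by
          rw [ENNReal.ofReal_add (by positivity) (by positivity)]
      _ ≤ ENNReal.ofReal (max 1 (4 * M + C₁) * h ^ (-(2 / (1 + ε)))) := by
          apply ENNReal.ofReal_le_ofReal
          nlinarith
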